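/- Define f_δ(α) = 2φ(α)/(α + 2(φ(α) - αΦ(-α))) for α ∈ [0,∞). Then f_δ is strictly decreasing on [0,∞), with f_δ(0) = 1 and f_δ(α) → 0 as α → ∞. -/

import Mathlib

open MeasureTheory Filter

/-- Standard Gaussian density `φ(z) = e^{-z²/2}/√(2π)`. -/
noncomputable def gaussPdf (z : ℝ) : ℝ := Real.exp (-z ^ 2 / 2) / Real.sqrt (2 * Real.pi)

/-- Standard Gaussian CDF `Φ(x) = ∫_{-∞}^x φ(z) dz`. -/
noncomputable def gaussCdf (x : ℝ) : ℝ := ∫ z in Set.Iic x, gaussPdf z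

/-- `f_δ(α) = 2φ(α)/(α + 2(φ(α) - αΦ(-α)))`. -/
noncomputable def fDelta (α : ℝ) : ℝ :=
  2 * gaussPdf α / (α + 2 * (gaussPdf α - α * gaussCdf (-α)))

/-!
Since `1 - 2Φ(-α) = 2G(α)` with `G(α) = ∫₀^α φ`, the denominator of `f_δ` is `2(φ(α) + αG(α))`,
so `f_δ(α) = 1 / (1 + k(α))` with `k(α) = αG(α)/φ(α)`. On `[0,∞)` the factors `α` and `G(α)` are
nonnegative and increasing while `φ(α)` is positive and decreasing, so `k` is strictly increasing.
Moreover `G(α) ≥ αφ(α)` because `φ` decreases on `[0, α]`, hence `k(α) ≥ α² → ∞`.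
-/

open Set

lemma gaussPdf_eq_gaussianPDFReal : gaussPdf = ProbabilityTheory.gaussianPDFReal 0 1 := by
  ext z
  simp [gaussPdf, ProbabilityTheory.gaussianPDFReal, div_eq_inv_mul]

lemma gaussPdf_pos (z : ℝ) : 0 < gaussPdf z := by
  rw [gaussPdf_eq_gaussianPDFReal]
  exact ProbabilityTheory.gaussianPDFReal_pos 0 1 z one_ne_zero

lemma gaussPdf_neg (z : ℝ) : gaussPdf (-z) = gaussPdf z := by
  simp [gaussPdf]

lemma integrable_gaussPdf : Integrable gaussPdf := by
  rw [gaussPdf_eq_gaussianPDFReal]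
  exact ProbabilityTheory.integrable_gaussianPDFReal 0 1

lemma integral_gaussPdf : ∫ z, gaussPdf z = 1 := by
  rw [gaussPdf_eq_gaussianPDFReal]
  exact ProbabilityTheory.integral_gaussianPDFReal_eq_one 0 one_ne_zero

lemma gaussPdf_strictAntiOn : StrictAntiOn gaussPdf (Ici 0) := by
  intro a ha b _ hab
  have hsq : -b ^ 2 / 2 < -a ^ 2 / 2 := by nlinarith [mem_Ici.mp ha]
  exact div_lt_div_of_pos_right (Real.exp_lt_exp.2 hsq) (by positivity)

lemma gaussCdf_neg (α : ℝ) : gaussCdf (-α) = ∫ z in Ioi α, gaussPdf z := by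
  rw [gaussCdf, ← neg_neg α, ← integral_comp_neg_Iic, neg_neg]
  simp only [gaussPdf_neg]

lemma gaussCdf_add_gaussCdf_neg (α : ℝ) : gaussCdf α + gaussCdf (-α) = 1 := by
  rw [gaussCdf_neg, gaussCdf, intervalIntegral.integral_Iic_add_Ioi
    integrable_gaussPdf.integrableOn integrable_gaussPdf.integrableOn, integral_gaussPdf]

lemma gaussCdf_zero : gaussCdf 0 = 1 / 2 := by
  have h := gaussCdf_add_gaussCdf_neg 0
  rw [neg_zero] at h
  linarith

/-- `G(α) = Φ(α) - 1/2`. -/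
noncomputable def gaussMass (α : ℝ) : ℝ := ∫ t in (0 : ℝ)..α, gaussPdf t

lemma gaussCdf_sub_gaussCdf_zero (α : ℝ) : gaussCdf α - gaussCdf 0 = gaussMass α :=
  intervalIntegral.integral_Iic_sub_Iic integrable_gaussPdf.integrableOn
    integrable_gaussPdf.integrableOn

lemma one_sub_two_mul_gaussCdf_neg (α : ℝ) : 1 - 2 * gaussCdf (-α) = 2 * gaussMass α := by
  linarith [gaussCdf_add_gaussCdf_neg α, gaussCdf_sub_gaussCdf_zero α, gaussCdf_zero]

lemma gaussMass_strictMono : StrictMono gaussMass := by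
  intro a b hab
  have hsplit : gaussMass a + ∫ t in a..b, gaussPdf t = gaussMass b :=
    intervalIntegral.integral_add_adjacent_intervals integrable_gaussPdf.intervalIntegrable
      integrable_gaussPdf.intervalIntegrable
  have hpos : 0 < ∫ t in a..b, gaussPdf t :=
    intervalIntegral.intervalIntegral_pos_of_pos integrable_gaussPdf.intervalIntegrable
      gaussPdf_pos hab
  linarith

lemma gaussMass_nonneg {α : ℝ} (hα : 0 ≤ α) : 0 ≤ gaussMass α := by
  simpa [gaussMass] using gaussMass_strictMono.monotone hα

lemma mul_gaussPdf_le_gaussMass {α : ℝ} (hα : 0 ≤ α) : α * gaussPdf α ≤ gaussMass α := by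
  have h := intervalIntegral.integral_mono_on hα intervalIntegrable_const
    integrable_gaussPdf.intervalIntegrable
    fun t ht ↦ gaussPdf_strictAntiOn.antitoneOn ht.1 (hα : α ∈ Ici 0) ht.2
  simpa [mul_comm, gaussMass] using h

lemma fDelta_eq_inv (α : ℝ) : fDelta α = (1 + α * gaussMass α / gaussPdf α)⁻¹ := by
  have hφ := (gaussPdf_pos α).ne'
  have hden : α + 2 * (gaussPdf α - α * gaussCdf (-α)) = 2 * (gaussPdf α + α * gaussMass α) := by
    linear_combination α * one_sub_two_mul_gaussCdf_neg α
  rw [fDelta, hden]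
  field_simp

lemma strictMonoOn_mul_gaussMass_div_gaussPdf :
    StrictMonoOn (fun α ↦ α * gaussMass α / gaussPdf α) (Ici 0) := by
  intro a ha b hb hab
  have hb' : 0 < b := lt_of_le_of_lt ha hab
  calc a * gaussMass a / gaussPdf a
      ≤ a * gaussMass b / gaussPdf b := by
        gcongr
        · exact mul_nonneg ha (gaussMass_nonneg hb'.le)
        · exact gaussPdf_pos b
        · exact gaussMass_strictMono.monotone hab.le
        · exact gaussPdf_strictAntiOn.antitoneOn ha hb hab.le
    _ < b * gaussMass b / gaussPdf b := by
        gcongr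
        · exact gaussPdf_pos b
        · simpa [gaussMass] using gaussMass_strictMono hb'

lemma sq_le_mul_gaussMass_div_gaussPdf {α : ℝ} (hα : 0 ≤ α) :
    α ^ 2 ≤ α * gaussMass α / gaussPdf α := by
  rw [le_div_iff₀ (gaussPdf_pos α), sq, mul_assoc]
  exact mul_le_mul_of_nonneg_left (mul_gaussPdf_le_gaussMass hα) hα

/-- `f_δ` is strictly decreasing on `[0,∞)`, with `f_δ(0) = 1` and `f_δ(α) → 0` as `α → ∞`. -/
theorem fDelta_strictAnti :
    StrictAntiOn fDelta (Set.Ici (0 : ℝ)) ∧ fDelta 0 = 1 ∧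
    Tendsto fDelta atTop (nhds 0) := by
  set k : ℝ → ℝ := fun α ↦ α * gaussMass α / gaussPdf α
  have hfk : fDelta = fun α ↦ (1 + k α)⁻¹ := funext fDelta_eq_inv
  have hk_nonneg {α : ℝ} (hα : 0 ≤ α) : 0 ≤ k α :=
    (sq_nonneg α).trans (sq_le_mul_gaussMass_div_gaussPdf hα)
  refine ⟨?_, by simp [hfk, k], ?_⟩
  · intro a ha b hb hab
    rw [hfk]
    exact inv_strictAnti₀ (by linarith [hk_nonneg ha])
      (by linarith [strictMonoOn_mul_gaussMass_div_gaussPdf ha hb hab])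
  · have hk_top : Tendsto k atTop atTop :=
      tendsto_atTop_mono' _ ((eventually_ge_atTop 0).mono fun α hα ↦
        sq_le_mul_gaussMass_div_gaussPdf hα) (tendsto_pow_atTop two_ne_zero)
    rw [hfk]
    exact (tendsto_atTop_add_const_left _ 1 hk_top).inv_tendsto_atTop
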